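/- arXiv:2307.03158 — 5 statements merged into one kernel-verified Lean document; each statement's English description precedes it below -/
import Mathlib

section
/- Let X be a separable metric space with a totally bounded metric, and let μ be a Borel probability measure on X such that μ(B) ∈ {0,1} for every open ball B with rational radius centered at points of a fixed countable dense set. Then μ is a Dirac measure: there exists a unique b ∈ X with μ({b}) = 1. -/
/-!
A totally bounded space is covered by finitely many arbitrarily small balls centred in `D`, so
one of them carries positive mass, hence full mass. Choosing such balls with radii tending to
zero, their intersection still has full measure and contains at most one point, which is
therefore an atom of mass one.
-/

open MeasureTheory Metric Set

section Metric

variable {X : Type*} [PseudoMetricSpace X]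

theorem Dense.exists_finite_ball_cover_of_totallyBounded
    (htb : TotallyBounded (univ : Set X)) {D : Set X} (hD : Dense D) {ε : ℝ} (hε : 0 < ε) :
    ∃ t ⊆ D, t.Finite ∧ univ ⊆ ⋃ c ∈ t, ball c ε := by
  obtain ⟨t, htD, htfin, hcover⟩ :=
    finite_approx_of_totallyBounded (htb.subset (subset_univ D)) (ε / 2) (half_pos hε)
  refine ⟨t, htD, htfin, ?_⟩
  -- The finite union of closed balls is closed and contains `D`, hence everything.
  have hclosed : IsClosed (⋃ c ∈ t, closedBall c (ε / 2)) :=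
    htfin.isClosed_biUnion fun _ _ => isClosed_closedBall
  calc univ = closure D := hD.closure_eq.symm
    _ ⊆ ⋃ c ∈ t, closedBall c (ε / 2) :=
      closure_minimal (hcover.trans (iUnion₂_mono fun _ _ => ball_subset_closedBall)) hclosed
    _ ⊆ ⋃ c ∈ t, ball c ε :=
      iUnion₂_mono fun _ _ => closedBall_subset_ball (half_lt_self hε)

end Metric

theorem subsingleton_iInter_ball {X ι : Type*} [MetricSpace X] (c : ι → X) (r : ι → ℝ)
    (hr : ∀ ε > 0, ∃ i, r i < ε) : (⋂ i, ball (c i) (r i)).Subsingleton := by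
  intro a ha b hb
  refine eq_of_forall_dist_le fun ε hε => ?_
  obtain ⟨i, hi⟩ := hr (ε / 2) (half_pos hε)
  have ha' := mem_ball.mp (mem_iInter.mp ha i)
  have hb' := mem_ball'.mp (mem_iInter.mp hb i)
  linarith [dist_triangle a (c i) b]

section Measure

variable {X : Type*} [MeasurableSpace X]

theorem exists_small_ball_measure_eq_one [PseudoMetricSpace X]
    (htb : TotallyBounded (univ : Set X)) {D : Set X} (hD : Dense D)
    (μ : Measure X) [NeZero μ]
    (h01 : ∀ c ∈ D, ∀ r : ℚ, 0 < r → μ (ball c (r : ℝ)) = 0 ∨ μ (ball c (r : ℝ)) = 1)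
    {δ : ℝ} (hδ : 0 < δ) :
    ∃ c ∈ D, ∃ r : ℚ, 0 < r ∧ (r : ℝ) < δ ∧ μ (ball c (r : ℝ)) = 1 := by
  obtain ⟨q, hq0, hqδ⟩ := exists_rat_btwn hδ
  obtain ⟨t, htD, htfin, hcover⟩ := hD.exists_finite_ball_cover_of_totallyBounded htb hq0
  have hq0' : 0 < q := by exact_mod_cast hq0
  obtain ⟨c, hct, hc⟩ : ∃ c ∈ t, μ (ball c (q : ℝ)) ≠ 0 := by
    by_contra! hnull
    exact NeZero.ne μ (Measure.measure_univ_eq_zero.mp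
      (measure_mono_null hcover ((measure_biUnion_null_iff htfin.countable).mpr hnull)))
  exact ⟨c, htD hct, q, hq0', hqδ, (h01 c (htD hct) q hq0').resolve_left hc⟩

variable {μ : Measure X} [IsProbabilityMeasure μ]

theorem measure_iInter_eq_one {ι : Type*} [Countable ι] {s : ι → Set X}
    (hs : ∀ i, MeasurableSet (s i)) (h : ∀ i, μ (s i) = 1) : μ (⋂ i, s i) = 1 := by
  rw [← prob_compl_eq_zero_iff (MeasurableSet.iInter hs), compl_iInter]
  exact measure_iUnion_null fun i => (prob_compl_eq_zero_iff (hs i)).mpr (h i)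

theorem eq_of_measure_singleton_eq_one [MeasurableSingletonClass X] {a b : X}
    (ha : μ {a} = 1) (hb : μ {b} = 1) : a = b := by
  by_contra hab
  have hnull : μ {a}ᶜ = 0 := (prob_compl_eq_zero_iff (measurableSet_singleton a)).mpr ha
  have : μ {b} = 0 := measure_mono_null (singleton_subset_iff.mpr (Ne.symm hab)) hnull
  simp [this] at hb

end Measure

theorem zero_one_on_balls_implies_dirac_general {X : Type*} [MetricSpace X]
    [MeasurableSpace X] [BorelSpace X]
    (htb : TotallyBounded (Set.univ : Set X))
    (D : Set X) (hDd : Dense D)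
    (μ : Measure X) [IsProbabilityMeasure μ]
    (h01 : ∀ c ∈ D, ∀ r : ℚ, 0 < r →
      μ (ball c (r : ℝ)) = 0 ∨ μ (ball c (r : ℝ)) = 1) :
    ∃! b : X, μ {b} = 1 := by
  choose c _ r _ hr hball using fun k : ℕ =>
    exists_small_ball_measure_eq_one htb hDd μ h01 (Nat.one_div_pos_of_nat (n := k))
  set S := ⋂ k, ball (c k) (r k : ℝ)
  have hS : μ S = 1 := measure_iInter_eq_one (fun _ => measurableSet_ball) hball
  have hSsub : S.Subsingleton := subsingleton_iInter_ball _ _ fun ε hε => by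
    obtain ⟨k, hk⟩ := exists_nat_one_div_lt hε
    exact ⟨k, (hr k).trans hk⟩
  obtain ⟨b, hb⟩ := nonempty_of_measure_ne_zero (hS ▸ one_ne_zero : μ S ≠ 0)
  have hb1 : μ {b} = 1 := hSsub.eq_singleton_of_mem hb ▸ hS
  exact ⟨b, hb1, fun a ha => eq_of_measure_singleton_eq_one ha hb1⟩

/-- If a Borel probability measure on a separable, totally bounded metric space gives
measure 0 or 1 to every rational-radius ball centered in a fixed countable dense set,
then it is a Dirac measure: there is a unique point of full measure. -/
theorem zero_one_on_balls_implies_dirac {X : Type*} [MetricSpace X]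
    [MeasurableSpace X] [BorelSpace X]
    (htb : TotallyBounded (Set.univ : Set X))
    (D : Set X) (hDc : D.Countable) (hDd : Dense D)
    (μ : Measure X) [IsProbabilityMeasure μ]
    (h01 : ∀ c ∈ D, ∀ r : ℚ, 0 < r →
      μ (ball c (r : ℝ)) = 0 ∨ μ (ball c (r : ℝ)) = 1) :
    ∃! b : X, μ {b} = 1 :=
  zero_one_on_balls_implies_dirac_general htb D hDd μ h01
end

section
/- Let σ be a stochastic kernel from a measurable space X to a separable metrizable space A, and let μ be a finite measure on X. Suppose that for every Borel set Γ ⊆ A, σ(Γ|x) ∈ {0,1} for μ-almost all x. Then there exists a measurable map φ : X → A such that σ(·|x) = δ_{φ(x)} for μ-almost all x ∈ X. -/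
/-!
A probability measure that takes only the values 0 and 1 on a countable separating family of
measurable sets gives full mass to the set of points lying, for every member of the family, on
the side of mass one; separation makes this set a single point, so the measure is a Dirac mass.
A separable metric space has such a family, so `σ x` is a Dirac mass `δ_{ψ x}` for `μ`-a.e. `x`.
The map `ψ` is `μ`-null-measurable, since `ψ ⁻¹' Γ` agrees a.e. with the measurable set
`{x | σ x Γ = 1}`; as the Borel σ-algebra is countably generated, `ψ` agrees a.e. with a
measurable `φ`.
-/

open MeasureTheory ProbabilityTheory

namespace MeasureTheory.Measure

theorem exists_eq_dirac_of_zero_one_on_separating {α ι : Type*} [MeasurableSpace α]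
    [Countable ι] {ν : Measure α} [IsProbabilityMeasure ν] {S : ι → Set α}
    (hSm : ∀ i, MeasurableSet (S i)) (hsep : ∀ x y, (∀ i, x ∈ S i ↔ y ∈ S i) → x = y)
    (h01 : ∀ i, ν (S i) = 0 ∨ ν (S i) = 1) : ∃ a, ν = dirac a := by
  have hν : ∀ᵐ x ∂ν, ∀ i, x ∈ S i ↔ ν (S i) = 1 := by
    refine ae_all_iff.2 fun i => ?_
    rcases h01 i with h | h
    · filter_upwards [measure_eq_zero_iff_ae_notMem.1 h] with x hx
      simp [hx, h]
    · filter_upwards [(ae_mem_iff_measure_eq (hSm i).nullMeasurableSet).2 (by simpa using h)]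
        with x hx
      simp [hx, h]
  obtain ⟨a, ha⟩ := hν.exists
  have hid : (id : α → α) =ᵐ[ν] fun _ => a := by
    filter_upwards [hν] with x hx using hsep x a fun i => (hx i).trans (ha i).symm
  exact ⟨a, by simpa using (hasLaw_dirac_of_ae_eq hid).map_eq⟩

end MeasureTheory.Measure

namespace ProbabilityTheory.Kernel

theorem exists_measurable_ae_eq_dirac {X A : Type*} [MeasurableSpace X] [MeasurableSpace A]
    [Nonempty A] [MeasurableSpace.CountablyGenerated A] {κ : Kernel X A} {μ : Measure X}
    (h : ∀ᵐ x ∂μ, ∃ a, κ x = Measure.dirac a) :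
    ∃ φ : X → A, Measurable φ ∧ ∀ᵐ x ∂μ, κ x = Measure.dirac (φ x) := by
  set ψ : X → A := fun x => Classical.epsilon fun a => κ x = Measure.dirac a
  have hψ : ∀ᵐ x ∂μ, κ x = Measure.dirac (ψ x) := h.mono fun x => Classical.epsilon_spec
  have hψm : NullMeasurable ψ μ := fun s hs =>
    (κ.measurable_coe hs (measurableSet_singleton 1)).nullMeasurableSet.congr <| by
      filter_upwards [hψ] with x hx
      change (κ x s = 1) = (ψ x ∈ s)
      rw [hx, dirac_eq_one_iff_mem hs]
  refine ⟨_, hψm.aemeasurable.measurable_mk, ?_⟩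
  filter_upwards [hψ, hψm.aemeasurable.ae_eq_mk] with x hx hφ
  rwa [← hφ]

end ProbabilityTheory.Kernel

theorem kernel_zero_one_implies_dirac_general {X A : Type*} [MeasurableSpace X]
    [MetricSpace A] [TopologicalSpace.SeparableSpace A] [MeasurableSpace A] [BorelSpace A]
    (σ : Kernel X A) [IsMarkovKernel σ]
    (μ : Measure X)
    (h01 : ∀ Γ : Set A, MeasurableSet Γ →
      ∀ᵐ x ∂μ, σ x Γ = 0 ∨ σ x Γ = 1) :
    ∃ φ : X → A, Measurable φ ∧ ∀ᵐ x ∂μ, σ x = Measure.dirac (φ x) := by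
  rcases isEmpty_or_nonempty X with hX | ⟨⟨x₀⟩⟩
  · exact ⟨isEmptyElim, measurable_of_empty _, .of_forall isEmptyElim⟩
  have : Nonempty A := nonempty_of_isProbabilityMeasure (σ x₀)
  obtain ⟨S, hSm, hsep⟩ := exists_seq_separating A MeasurableSet.empty Set.univ
  refine σ.exists_measurable_ae_eq_dirac ?_
  filter_upwards [ae_all_iff.2 fun n => h01 (S n) (hSm n)] with x hx
  exact Measure.exists_eq_dirac_of_zero_one_on_separating hSm
    (fun y z hyz => hsep y trivial z trivial hyz) hx

/-- If a stochastic kernel from `X` to a separable metrizable Borel space `A` takes only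
the values 0 and 1 on each Borel set, `μ`-a.e., then the kernel coincides `μ`-a.e.
with a Dirac kernel `δ_{φ(x)}` for some measurable `φ : X → A`. -/
theorem kernel_zero_one_implies_dirac {X A : Type*} [MeasurableSpace X]
    [MetricSpace A] [TopologicalSpace.SeparableSpace A] [MeasurableSpace A] [BorelSpace A]
    (σ : Kernel X A) [IsMarkovKernel σ]
    (μ : Measure X) [IsFiniteMeasure μ]
    (h01 : ∀ Γ : Set A, MeasurableSet Γ →
      ∀ᵐ x ∂μ, σ x Γ = 0 ∨ σ x Γ = 1) :
    ∃ φ : X → A, Measurable φ ∧ ∀ᵐ x ∂μ, σ x = Measure.dirac (φ x) :=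
  kernel_zero_one_implies_dirac_general σ μ h01
end

section
/- Let σ, σ₁, σ₂ be stochastic kernels from X to A with σ(·|x) = α σ₁(·|x) + (1-α) σ₂(·|x) for all x, where α ∈ (0,1). If for some Borel sets Γ_A ⊆ A, Γ_X ⊆ X and some measure μ on X we have μ(Γ_X) > 0 and σ(Γ_A|x) ∈ [α, 1-α] for all x ∈ Γ_X, then one can construct stochastic kernels σ₁', σ₂' with α σ₁' + (1-α) σ₂' = σ and σ₂'(Γ_A|x) − σ₁'(Γ_A|x) ≥ α/(1-α) > 0 for all x ∈ Γ_X. Concretely, defining σ₁'(Γ|x) = σ(Γ ∩ Γ_A^c|x)/σ(Γ_A^c|x) and σ₂'(Γ|x) = σ(Γ ∩ Γ_A|x)/(1-α) + σ(Γ ∩ Γ_A^c|x)(σ(Γ_A^c|x) − α)/((1-α)σ(Γ_A^c|x)) for x ∈ Γ_X (and both equal to σ otherwise) yields such kernels. -/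
/-! On `Γ_X`, take for `σ₁'` the conditional law `σ(·|x)[|Γ_Aᶜ]`, which gives `Γ_A` mass zero, and
for `σ₂'` the residual `(σ - α σ₁') / (1 - α)`. The residual is a nonnegative measure because
`σ(Γ_Aᶜ|x) ≥ α`, it has total mass one because both `σ` and `σ₁'` do, and it gives `Γ_A` the mass
`σ(Γ_A|x) / (1 - α) ≥ α / (1 - α)`. -/

open MeasureTheory ProbabilityTheory ENNReal

namespace ProbabilityTheory

variable {A : Type*} [MeasurableSpace A]

lemma measure_smul_cond (ν : Measure A) [IsFiniteMeasure ν] {s : Set A} (hs : MeasurableSet s) :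
    ν s • ν[|s] = ν.restrict s := by
  ext t ht
  rw [Measure.smul_apply, smul_eq_mul, mul_comm, cond_mul_eq_inter hs, Measure.restrict_apply ht,
    Set.inter_comm]

lemma cond_compl_apply_self (ν : Measure A) {s : Set A} (hs : MeasurableSet s) : ν[s | sᶜ] = 0 := by
  rw [cond_apply hs.compl, Set.compl_inter_self, measure_empty, mul_zero]

/-- The measure `(ν - α • ν[|sᶜ]) / (1 - α)`, written without subtraction of measures. -/
noncomputable def residualMeasure (ν : Measure A) (s : Set A) (α : ℝ≥0∞) : Measure A :=
  (1 - α)⁻¹ • ν.restrict s + ((ν sᶜ - α) / (1 - α)) • ν[|sᶜ]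

variable {ν : Measure A} {s : Set A} {α : ℝ≥0∞}

lemma residualMeasure_apply [IsFiniteMeasure ν] (hs : MeasurableSet s) {t : Set A}
    (ht : MeasurableSet t) :
    residualMeasure ν s α t = ν (t ∩ s) / (1 - α) + ν (t ∩ sᶜ) * (ν sᶜ - α) / ((1 - α) * ν sᶜ) := by
  have h1α : 1 - α ≠ ∞ := ne_top_of_le_ne_top one_ne_top tsub_le_self
  rw [residualMeasure, Measure.add_apply, Measure.smul_apply, Measure.smul_apply,
    Measure.restrict_apply ht, cond_apply hs.compl, smul_eq_mul, smul_eq_mul,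
    ENNReal.div_eq_inv_mul, ENNReal.div_eq_inv_mul, ENNReal.div_eq_inv_mul,
    ENNReal.mul_inv (Or.inr (measure_ne_top ν _)) (Or.inl h1α), Set.inter_comm sᶜ]
  ring

lemma residualMeasure_apply_self (hs : MeasurableSet s) :
    residualMeasure ν s α s = ν s / (1 - α) := by
  rw [residualMeasure, Measure.add_apply, Measure.smul_apply, Measure.smul_apply,
    Measure.restrict_apply_self, cond_compl_apply_self ν hs, smul_eq_mul, smul_eq_mul, mul_zero,
    add_zero, ENNReal.div_eq_inv_mul]

lemma smul_cond_compl_add_smul_residualMeasure [IsFiniteMeasure ν] (hs : MeasurableSet s)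
    (hα1 : α < 1) (hαs : α ≤ ν sᶜ) :
    α • ν[|sᶜ] + (1 - α) • residualMeasure ν s α = ν := by
  have h1α0 : 1 - α ≠ 0 := (tsub_pos_of_lt hα1).ne'
  have h1αT : 1 - α ≠ ∞ := ne_top_of_le_ne_top one_ne_top tsub_le_self
  calc α • ν[|sᶜ] + (1 - α) • residualMeasure ν s α
      = ν.restrict s + (α + (ν sᶜ - α)) • ν[|sᶜ] := by
        rw [residualMeasure, smul_add, smul_smul, smul_smul, ENNReal.mul_inv_cancel h1α0 h1αT,
          one_smul, ENNReal.mul_div_cancel h1α0 h1αT, add_smul]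
        abel
    _ = ν.restrict s + ν.restrict sᶜ := by
        rw [add_tsub_cancel_of_le hαs, measure_smul_cond ν hs.compl]
    _ = ν := Measure.restrict_add_restrict_compl hs

lemma isProbabilityMeasure_residualMeasure [IsProbabilityMeasure ν] (hs : MeasurableSet s)
    (hα0 : 0 < α) (hα1 : α < 1) (hαs : α ≤ ν sᶜ) :
    IsProbabilityMeasure (residualMeasure ν s α) := by
  have : IsProbabilityMeasure ν[|sᶜ] := cond_isProbabilityMeasure (hα0.trans_le hαs).ne'
  have hmix := congrArg (· Set.univ) (smul_cond_compl_add_smul_residualMeasure hs hα1 hαs)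
  simp only [Measure.add_apply, Measure.smul_apply, smul_eq_mul, measure_univ, mul_one] at hmix
  constructor
  refine (ENNReal.mul_right_inj (tsub_pos_of_lt hα1).ne'
    (ne_top_of_le_ne_top one_ne_top tsub_le_self)).1 ?_
  rw [mul_one]
  exact ENNReal.eq_sub_of_add_eq hα1.ne_top ((add_comm _ _).trans hmix)

lemma le_measure_compl_of_le_one_sub [IsProbabilityMeasure ν] (hs : MeasurableSet s)
    (hα : α ≤ 1) (h : ν s ≤ 1 - α) : α ≤ ν sᶜ := by
  rw [prob_compl_eq_one_sub hs]
  exact ENNReal.le_sub_of_add_le_left (measure_ne_top ν s)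
    ((ENNReal.le_sub_iff_add_le_right (ne_top_of_le_ne_top one_ne_top hα) hα).1 h)

namespace Kernel

variable {X : Type*} [MeasurableSpace X]

lemma measurable_cond (κ : Kernel X A) (hs : MeasurableSet s) :
    Measurable fun x => (κ x)[|s] :=
  Measure.measurable_of_measurable_coe _ fun t ht => by
    simp only [cond_apply hs]
    exact (κ.measurable_coe hs).inv.mul (κ.measurable_coe (hs.inter ht))

lemma measurable_residualMeasure (κ : Kernel X A) (hs : MeasurableSet s) (α : ℝ≥0∞) :
    Measurable fun x => residualMeasure (κ x) s α :=
  Measure.measurable_of_measurable_coe _ fun t ht => by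
    simp only [residualMeasure, Measure.add_apply, Measure.smul_apply, smul_eq_mul,
      Measure.restrict_apply ht]
    exact (κ.measurable_coe (ht.inter hs)).const_mul _ |>.add
      ((((κ.measurable_coe hs.compl).sub measurable_const).div_const _).mul
        ((Measure.measurable_coe ht).comp (measurable_cond κ hs.compl)))

lemma isMarkovKernel_piecewise_of_forall {t : Set X} [DecidablePred (· ∈ t)] (ht : MeasurableSet t)
    (κ η : Kernel X A) (hκ : ∀ x ∈ t, IsProbabilityMeasure (κ x)) [IsMarkovKernel η] :
    IsMarkovKernel (piecewise ht κ η) where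
  isProbabilityMeasure x := by
    rw [piecewise_apply]
    split_ifs with hx
    exacts [hκ x hx, inferInstance]

end Kernel

end ProbabilityTheory

theorem kernel_splitting_general {X A : Type*} [MeasurableSpace X] [MeasurableSpace A]
    (σ : Kernel X A) [IsMarkovKernel σ]
    (α : ℝ≥0∞) (hα0 : 0 < α) (hα1 : α < 1)
    (ΓA : Set A) (hΓA : MeasurableSet ΓA)
    (ΓX : Set X) (hΓX : MeasurableSet ΓX)
    (hmid : ∀ x ∈ ΓX, α ≤ σ x ΓA ∧ σ x ΓA ≤ 1 - α) :
    ∃ σ₁' σ₂' : Kernel X A, IsMarkovKernel σ₁' ∧ IsMarkovKernel σ₂' ∧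
      (∀ x ∉ ΓX, σ₁' x = σ x ∧ σ₂' x = σ x) ∧
      (∀ x ∈ ΓX, ∀ Γ : Set A, MeasurableSet Γ →
        σ₁' x Γ = σ x (Γ ∩ ΓAᶜ) / σ x ΓAᶜ ∧
        σ₂' x Γ = σ x (Γ ∩ ΓA) / (1 - α)
          + σ x (Γ ∩ ΓAᶜ) * (σ x ΓAᶜ - α) / ((1 - α) * σ x ΓAᶜ)) ∧
      (∀ x, ∀ Γ : Set A, MeasurableSet Γ →
        σ x Γ = α * σ₁' x Γ + (1 - α) * σ₂' x Γ) ∧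
      (∀ x ∈ ΓX, α / (1 - α) ≤ σ₂' x ΓA - σ₁' x ΓA) := by
  classical
  have hcompl x (hx : x ∈ ΓX) : α ≤ σ x ΓAᶜ :=
    le_measure_compl_of_le_one_sub hΓA hα1.le (hmid x hx).2
  set σ₁ := Kernel.piecewise hΓX ⟨_, Kernel.measurable_cond σ hΓA.compl⟩ σ
  set σ₂ := Kernel.piecewise hΓX ⟨_, Kernel.measurable_residualMeasure σ hΓA α⟩ σ
  have hmix x : α • σ₁ x + (1 - α) • σ₂ x = σ x := by
    by_cases hx : x ∈ ΓX
    · simp only [σ₁, σ₂, Kernel.piecewise_apply, if_pos hx, Kernel.coe_mk]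
      exact smul_cond_compl_add_smul_residualMeasure hΓA hα1 (hcompl x hx)
    · simp only [σ₁, σ₂, Kernel.piecewise_apply, if_neg hx, ← add_smul,
        add_tsub_cancel_of_le hα1.le, one_smul]
  refine ⟨σ₁, σ₂, ?_, ?_, fun x hx => by simp [σ₁, σ₂, Kernel.piecewise_apply, hx],
    fun x hx Γ hΓ => ⟨?_, ?_⟩, fun x Γ _ => by rw [← hmix x]; rfl, fun x hx => ?_⟩
  · exact Kernel.isMarkovKernel_piecewise_of_forall hΓX _ _ fun x hx =>
      cond_isProbabilityMeasure (hα0.trans_le (hcompl x hx)).ne'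
  · exact Kernel.isMarkovKernel_piecewise_of_forall hΓX _ _ fun x hx =>
      isProbabilityMeasure_residualMeasure hΓA hα0 hα1 (hcompl x hx)
  · simp only [σ₁, Kernel.piecewise_apply, if_pos hx, Kernel.coe_mk]
    rw [cond_apply hΓA.compl, Set.inter_comm, ENNReal.div_eq_inv_mul]
  · simp only [σ₂, Kernel.piecewise_apply, if_pos hx, Kernel.coe_mk]
    exact residualMeasure_apply hΓA hΓ
  · simp only [σ₁, σ₂, Kernel.piecewise_apply, if_pos hx, Kernel.coe_mk]
    rw [residualMeasure_apply_self hΓA, cond_compl_apply_self _ hΓA, tsub_zero]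
    exact ENNReal.div_le_div_right (hmid x hx).1 _

/-- Splitting a randomized kernel: if `σ = α σ₁ + (1-α) σ₂` pointwise is desired and
`σ(Γ_A|x) ∈ [α, 1-α]` on a set `Γ_X` of positive measure, then there exist stochastic
kernels `σ₁'`, `σ₂'`, given on `Γ_X` by the explicit formulas
`σ₁'(Γ|x) = σ(Γ ∩ Γ_Aᶜ|x)/σ(Γ_Aᶜ|x)` and
`σ₂'(Γ|x) = σ(Γ ∩ Γ_A|x)/(1-α) + σ(Γ ∩ Γ_Aᶜ|x)(σ(Γ_Aᶜ|x) - α)/((1-α)σ(Γ_Aᶜ|x))`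
(and equal to `σ` off `Γ_X`), such that `α σ₁' + (1-α) σ₂' = σ` and
`σ₂'(Γ_A|x) - σ₁'(Γ_A|x) ≥ α/(1-α)` for all `x ∈ Γ_X`. -/
theorem kernel_splitting {X A : Type*} [MeasurableSpace X] [MeasurableSpace A]
    (σ : Kernel X A) [IsMarkovKernel σ]
    (α : ℝ≥0∞) (hα0 : 0 < α) (hα1 : α < 1)
    (ΓA : Set A) (hΓA : MeasurableSet ΓA)
    (ΓX : Set X) (hΓX : MeasurableSet ΓX)
    (μ : Measure X) (hμ : 0 < μ ΓX)
    (hmid : ∀ x ∈ ΓX, α ≤ σ x ΓA ∧ σ x ΓA ≤ 1 - α) :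
    ∃ σ₁' σ₂' : Kernel X A, IsMarkovKernel σ₁' ∧ IsMarkovKernel σ₂' ∧
      (∀ x ∉ ΓX, σ₁' x = σ x ∧ σ₂' x = σ x) ∧
      (∀ x ∈ ΓX, ∀ Γ : Set A, MeasurableSet Γ →
        σ₁' x Γ = σ x (Γ ∩ ΓAᶜ) / σ x ΓAᶜ ∧
        σ₂' x Γ = σ x (Γ ∩ ΓA) / (1 - α)
          + σ x (Γ ∩ ΓAᶜ) * (σ x ΓAᶜ - α) / ((1 - α) * σ x ΓAᶜ)) ∧
      (∀ x, ∀ Γ : Set A, MeasurableSet Γ →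
        σ x Γ = α * σ₁' x Γ + (1 - α) * σ₂' x Γ) ∧
      (∀ x ∈ ΓX, α / (1 - α) ≤ σ₂' x ΓA - σ₁' x ΓA) :=
  kernel_splitting_general σ α hα0 hα1 ΓA hΓA ΓX hΓX hmid
end

section
/- Let E be a nonempty convex subset of ℝ^n and u ∈ E a Pareto optimal point of E. Then the minimal face G(u) of E containing u consists entirely of Pareto optimal points of E: G(u) ⊆ Par(E). -/
variable {n : ℕ}

/-- `F` is a face of the convex set `E` in `ℝⁿ`. -/
def IsFace (E F : Set (Fin n → ℝ)) : Prop :=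
  F ⊆ E ∧ Convex ℝ F ∧
    ∀ x₁ ∈ E, ∀ x₂ ∈ E, ∀ α : ℝ, 0 < α → α < 1 →
      α • x₁ + (1 - α) • x₂ ∈ F → x₁ ∈ F ∧ x₂ ∈ F

/-- The set of Pareto optimal points of `E`: points `u ∈ E` such that no `v ∈ E`
satisfies `v ≤ u` componentwise except `v = u`. -/
def Par (E : Set (Fin n → ℝ)) : Set (Fin n → ℝ) :=
  {u ∈ E | ∀ v ∈ E, (∀ i, v i ≤ u i) → v = u}

/-- The minimal face of `E` containing `u`: the intersection of all faces containing `u`. -/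
def minimalFace (E : Set (Fin n → ℝ)) (u : Fin n → ℝ) : Set (Fin n → ℝ) :=
  ⋂₀ {F | IsFace E F ∧ u ∈ F}

/-! The points `x ∈ E` for which the segment from `x` through `u` extends beyond `u` inside `E`
form a face of `E` containing `u`, hence contain `G(u)`. Every such `x` is an endpoint of an open
segment in `E` through `u`, and Pareto optimality passes from a point of an open segment in a
convex set to its endpoints: lowering an endpoint lowers the point. -/

section Faces

variable {𝕜 V : Type*} [Field 𝕜] [LinearOrder 𝕜] [IsStrictOrderedRing 𝕜]
  [AddCommGroup V] [Module 𝕜 V] {E : Set V} {u x : V}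

variable (𝕜) in
def extendableThrough (E : Set V) (u : V) : Set V :=
  {x ∈ E | ∃ ε : 𝕜, 0 < ε ∧ u + ε • (u - x) ∈ E}

lemma self_mem_extendableThrough (hu : u ∈ E) : u ∈ extendableThrough 𝕜 E u :=
  ⟨hu, 1, one_pos, by simpa using hu⟩

lemma mem_openSegment_add_smul_sub {ε : 𝕜} (hε : 0 < ε) :
    u ∈ openSegment 𝕜 x (u + ε • (u - x)) := by
  have h1ε : (1 + ε) ≠ 0 := by positivity
  refine ⟨ε / (1 + ε), 1 / (1 + ε), by positivity, by positivity, by field_simp; ring, ?_⟩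
  match_scalars <;> field_simp
  ring

lemma Convex.add_smul_sub_mem_of_le (hE : Convex 𝕜 E) (hu : u ∈ E) {ε δ : 𝕜}
    (hε : u + ε • (u - x) ∈ E) (hδ₀ : 0 ≤ δ) (hδε : δ ≤ ε) : u + δ • (u - x) ∈ E := by
  rcases hδ₀.eq_or_lt with rfl | hδ
  · simpa using hu
  have hε₀ : 0 < ε := hδ.trans_le hδε
  have := hE.add_smul_mem hu hε ⟨div_nonneg hδ.le hε₀.le, (div_le_one hε₀).2 hδε⟩
  rwa [smul_smul, div_mul_cancel₀ _ hε₀.ne'] at this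

lemma Convex.convex_extendableThrough (hE : Convex 𝕜 E) (hu : u ∈ E) :
    Convex 𝕜 (extendableThrough 𝕜 E u) := by
  rintro x₁ ⟨hx₁, ε₁, hε₁, hy₁⟩ x₂ ⟨hx₂, ε₂, hε₂, hy₂⟩ a b ha hb hab
  refine ⟨hE hx₁ hx₂ ha hb hab, min ε₁ ε₂, lt_min hε₁ hε₂, ?_⟩
  have hp₁ := hE.add_smul_sub_mem_of_le hu hy₁ (lt_min hε₁ hε₂).le (min_le_left _ _)
  have hp₂ := hE.add_smul_sub_mem_of_le hu hy₂ (lt_min hε₁ hε₂).le (min_le_right _ _)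
  convert hE hp₁ hp₂ ha hb hab using 1
  obtain rfl : b = 1 - a := by linear_combination hab
  module

lemma Convex.exists_add_smul_sub_mem_of_openSegment (hE : Convex 𝕜 E) {x₁ x₂ : V}
    (hx₂ : x₂ ∈ E) {a b : 𝕜} (ha : 0 < a) (hb : 0 < b) (hab : a + b = 1) {ε : 𝕜} (hε : 0 < ε)
    (hy : u + ε • (u - (a • x₁ + b • x₂)) ∈ E) :
    ∃ δ : 𝕜, 0 < δ ∧ u + δ • (u - x₁) ∈ E := by
  have hc : 0 < 1 + ε * b := by positivity
  -- weights `1 : ε b` on `u + ε • (u - (a • x₁ + b • x₂))` and `x₂` cancel the `x₂` term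
  refine ⟨ε * a / (1 + ε * b), by positivity, ?_⟩
  convert hE hy hx₂ (by positivity : (0 : 𝕜) ≤ 1 / (1 + ε * b))
    (by positivity : (0 : 𝕜) ≤ ε * b / (1 + ε * b)) (by field_simp) using 1
  obtain rfl : b = 1 - a := by linear_combination hab
  match_scalars <;> field_simp <;> ring

lemma Convex.isExtreme_extendableThrough (hE : Convex 𝕜 E) :
    IsExtreme 𝕜 E (extendableThrough 𝕜 E u) := by
  refine ⟨fun x hx ↦ hx.1, ?_⟩
  rintro x₁ hx₁ x₂ hx₂ _ ⟨-, ε, hε, hy⟩ ⟨a, b, ha, hb, hab, rfl⟩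
  exact ⟨hx₁, hE.exists_add_smul_sub_mem_of_openSegment hx₂ ha hb hab hε hy⟩

end Faces

lemma Convex.isExtreme_setOf_minimal {𝕜 V : Type*} [Field 𝕜] [LinearOrder 𝕜]
    [AddCommGroup V] [PartialOrder V] [IsOrderedAddMonoid V] [Module 𝕜 V] [PosSMulMono 𝕜 V]
    {E : Set V} (hE : Convex 𝕜 E) :
    IsExtreme 𝕜 E {x | Minimal (· ∈ E) x} := by
  refine ⟨fun x hx ↦ hx.prop, ?_⟩
  rintro x₁ hx₁ x₂ hx₂ _ hmin ⟨a, b, ha, hb, hab, rfl⟩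
  refine ⟨hx₁, fun v hv hvx ↦ ?_⟩
  have hw := hmin.eq_of_le (hE hv hx₂ ha.le hb.le hab)
    (add_le_add_left (smul_le_smul_of_nonneg_left hvx ha.le) _)
  exact (smul_right_injective V ha.ne' (add_right_cancel hw)).ge

lemma isFace_of_isExtreme {E F : Set (Fin n → ℝ)} (hext : IsExtreme ℝ E F)
    (hconv : Convex ℝ F) : IsFace E F := by
  refine ⟨hext.subset, hconv, fun x₁ hx₁ x₂ hx₂ α hα₀ hα₁ hF ↦ ?_⟩
  have hseg : α • x₁ + (1 - α) • x₂ ∈ openSegment ℝ x₁ x₂ :=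
    ⟨α, 1 - α, hα₀, sub_pos.2 hα₁, add_sub_cancel _ _, rfl⟩
  exact ⟨hext.left_mem_of_mem_openSegment hx₁ hx₂ hF hseg,
    hext.right_mem_of_mem_openSegment hx₁ hx₂ hF hseg⟩

lemma mem_par_iff_minimal {E : Set (Fin n → ℝ)} {u : Fin n → ℝ} :
    u ∈ Par E ↔ Minimal (· ∈ E) u := by
  simp only [Par, minimal_iff, Pi.le_def]
  exact and_congr_right fun _ ↦ forall₂_congr fun v _ ↦ imp_congr_right fun _ ↦ eq_comm

theorem minimalFace_subset_pareto_general (E : Set (Fin n → ℝ))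
    (hconv : Convex ℝ E) (u : Fin n → ℝ) (hu : u ∈ Par E) :
    minimalFace E u ⊆ Par E := by
  have huE : u ∈ E := hu.1
  intro x hx
  obtain ⟨hxE, ε, hε, hy⟩ : x ∈ extendableThrough ℝ E u :=
    hx _ ⟨isFace_of_isExtreme hconv.isExtreme_extendableThrough
      (hconv.convex_extendableThrough huE), self_mem_extendableThrough huE⟩
  exact mem_par_iff_minimal.2 <| hconv.isExtreme_setOf_minimal.left_mem_of_mem_openSegment
    hxE hy (mem_par_iff_minimal.1 hu) (mem_openSegment_add_smul_sub hε)

/-- If `u` is Pareto optimal in a nonempty convex set `E ⊆ ℝⁿ`, then the minimal face of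
`E` containing `u` consists entirely of Pareto optimal points. -/
theorem minimalFace_subset_pareto (E : Set (Fin n → ℝ)) (hE : E.Nonempty)
    (hconv : Convex ℝ E) (u : Fin n → ℝ) (hu : u ∈ Par E) :
    minimalFace E u ⊆ Par E :=
  minimalFace_subset_pareto_general E hconv u hu
end

section
/- Consider a substochastic transition kernel Q(dy|x) on a Borel space X (interpreted as a Markov chain with killing) with initial state x₀, and suppose the occupation measure M(Γ) = Σ_{n≥0} Qⁿ(Γ|x₀) is finite on X. Let f : X → ℝ be bounded measurable and define v(x) := Σ_{n≥0} E_x[f(X_n)] (well defined and finite for M-a.e. x). Then v satisfies v(x) = f(x) + ∫_X v(y) Q(dy|x) for M-almost all x; moreover, if w : X → ℝ is bounded measurable and satisfies w(x) = f(x) + ∫_X w(y) Q(dy|x) M-a.e., then w(x) = v(x) for M-almost all x ∈ X. -/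
open MeasureTheory ProbabilityTheory ENNReal

/-- The `n`-step kernel of a (sub)stochastic kernel `Q`. -/
noncomputable def iterK {X : Type*} [MeasurableSpace X] (Q : Kernel X X) : ℕ → Kernel X X
  | 0 => Kernel.id
  | n + 1 => Q ∘ₖ iterK Q n

/-!
Let `N(x) = Σₙ Qⁿ(·|x)` be the occupation measure started at `x`, so that `M = N(x₀)`.
Splitting off the term `n = 0` gives `N = δ + N ∘ Q = δ + Q ∘ N`, and the measures
`(N ∘ Qᵐ)(x₀)` are dominated by `M`; hence for `M`-a.e. `x` the measure `N(x)` is finite, and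
`N(x)`-a.e. point solves the equation whenever `M`-a.e. point does. For bounded `g` and finite
`N(x)` one has `Σₙ ∫ g dQⁿ(·|x) = ∫ g dN(x)`, so both claims are integrals of the identity
`N(x) = δₓ + (N ∘ Q)(x)`: against `f` it is the Poisson equation, and against a solution `w`
it gives `∫ f dN(x) = ∫ (w - Qw) dN(x) = w(x)`.
-/

lemma Measurable.integrable_of_abs_le {α : Type*} [MeasurableSpace α] {μ : Measure α}
    [IsFiniteMeasure μ] {g : α → ℝ} (hg : Measurable g) {C : ℝ} (hC : ∀ x, |g x| ≤ C) :
    Integrable g μ :=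
  .of_bound hg.aestronglyMeasurable C (ae_of_all _ hC)

namespace ProbabilityTheory.Kernel

variable {X : Type*} [MeasurableSpace X] (Q : Kernel X X)

lemma iterK_one : iterK Q 1 = Q := comp_id Q

lemma iterK_comp_iterK (n m : ℕ) : iterK Q n ∘ₖ iterK Q m = iterK Q (n + m) := by
  induction n with
  | zero => rw [iterK, id_comp, zero_add]
  | succ n ih => rw [iterK, comp_assoc, ih, Nat.succ_add, iterK]

lemma iterK_succ' (n : ℕ) : iterK Q (n + 1) = iterK Q n ∘ₖ Q := by
  rw [← iterK_comp_iterK, iterK_one]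

noncomputable def occupation : Kernel X X := Kernel.sum (iterK Q)

lemma occupation_apply_univ (x : X) : occupation Q x Set.univ = ∑' n, iterK Q n x Set.univ :=
  Measure.sum_apply _ MeasurableSet.univ

lemma occupation_comp_iterK_le (m : ℕ) (x : X) :
    (occupation Q ∘ₖ iterK Q m) x ≤ occupation Q x := by
  intro s
  simp only [occupation, comp_sum_left, iterK_comp_iterK, sum_apply,
    Measure.sum_apply_of_countable]
  exact tsum_comp_le_tsum_of_injective (add_left_injective m) fun n => iterK Q n x s

lemma occupation_comp_le (x : X) : (occupation Q ∘ₖ Q) x ≤ occupation Q x := by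
  simpa only [iterK_one] using occupation_comp_iterK_le Q 1 x

lemma comp_occupation : Q ∘ₖ occupation Q = occupation Q ∘ₖ Q := by
  simp only [occupation, comp_sum_left, comp_sum_right, ← iterK_succ']
  rfl

lemma occupation_apply_eq_dirac_add (x : X) :
    occupation Q x = Measure.dirac x + (occupation Q ∘ₖ Q) x := by
  rw [occupation, comp_sum_left]
  simp only [← iterK_succ']
  ext s hs
  rw [Measure.add_apply, sum_apply' _ _ hs, sum_apply' _ _ hs, tsum_eq_zero_add' ENNReal.summable]
  rfl

lemma lintegral_occupation_apply_le (m : ℕ) (x₀ : X) {s : Set X} (hs : MeasurableSet s) :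
    ∫⁻ x, occupation Q x s ∂(iterK Q m x₀) ≤ occupation Q x₀ s := by
  rw [← comp_apply' _ _ _ hs]
  exact occupation_comp_iterK_le Q m x₀ s

lemma ae_occupation_apply_lt_top (x₀ : X) {s : Set X} (hs : MeasurableSet s)
    (h : occupation Q x₀ s ≠ ∞) : ∀ᵐ x ∂occupation Q x₀, occupation Q x s < ∞ :=
  Measure.ae_sum_iff.mpr fun m => ae_lt_top ((occupation Q).measurable_coe hs)
    ((lintegral_occupation_apply_le Q m x₀ hs).trans_lt h.lt_top).ne

lemma ae_ae_occupation {x₀ : X} {p : X → Prop} (hp : MeasurableSet {x | p x})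
    (h : ∀ᵐ x ∂occupation Q x₀, p x) :
    ∀ᵐ x ∂occupation Q x₀, ∀ᵐ y ∂occupation Q x, p y := by
  refine Measure.ae_sum_iff.mpr fun m => ?_
  have hnull : ∫⁻ x, occupation Q x {y | ¬p y} ∂(iterK Q m x₀) = 0 :=
    le_antisymm ((lintegral_occupation_apply_le Q m x₀ hp.compl).trans (ae_iff.mp h).le)
      zero_le
  exact ((lintegral_eq_zero_iff ((occupation Q).measurable_coe hp.compl)).mp hnull).mono
    fun x hx => ae_iff.mpr hx

variable {Q} {x : X}

lemma tsum_integral_iterK_eq_integral_occupation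
    (hx : occupation Q x Set.univ ≠ ∞) {g : X → ℝ} (hg : Measurable g) {C : ℝ}
    (hC : ∀ y, |g y| ≤ C) :
    ∑' n, ∫ y, g y ∂iterK Q n x = ∫ y, g y ∂occupation Q x := by
  have : IsFiniteMeasure (occupation Q x) := ⟨hx.lt_top⟩
  exact (integral_sum_measure (hg.integrable_of_abs_le (μ := occupation Q x) hC)).symm

lemma tsum_integral_iterK_eq_add_integral
    (hx : occupation Q x Set.univ ≠ ∞) {f : X → ℝ} (hf : Measurable f) {C : ℝ}
    (hC : ∀ y, |f y| ≤ C) :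
    ∑' n, ∫ y, f y ∂iterK Q n x = f x + ∫ y, ∑' n, ∫ z, f z ∂iterK Q n y ∂Q x := by
  have : IsFiniteMeasure (occupation Q x) := ⟨hx.lt_top⟩
  have : IsFiniteMeasure ((occupation Q ∘ₖ Q) x) :=
    isFiniteMeasure_of_le _ (occupation_comp_le Q x)
  have hfin : ∀ᵐ y ∂Q x, occupation Q y Set.univ < ∞ := by
    simpa only [iterK_one] using ae_lt_top ((occupation Q).measurable_coe .univ)
      ((lintegral_occupation_apply_le Q 1 x .univ).trans_lt hx.lt_top).ne
  rw [tsum_integral_iterK_eq_integral_occupation hx hf hC, occupation_apply_eq_dirac_add,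
    integral_add_measure (hf.integrable_of_abs_le hC) (hf.integrable_of_abs_le hC),
    integral_dirac' _ _ hf.stronglyMeasurable, integral_comp (hf.integrable_of_abs_le hC)]
  congr 1
  exact integral_congr_ae <| hfin.mono fun y hy =>
    (tsum_integral_iterK_eq_integral_occupation hy.ne hf hC).symm

lemma eq_integral_occupation_of_ae
    (hx : occupation Q x Set.univ ≠ ∞) {w : X → ℝ} (hw : Measurable w) {C : ℝ}
    (hC : ∀ y, |w y| ≤ C) {f : X → ℝ}
    (h : ∀ᵐ y ∂occupation Q x, w y = f y + ∫ z, w z ∂Q y) :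
    w x = ∫ y, f y ∂occupation Q x := by
  have : IsFiniteMeasure (occupation Q x) := ⟨hx.lt_top⟩
  have : IsFiniteMeasure ((occupation Q ∘ₖ Q) x) :=
    isFiniteMeasure_of_le _ (occupation_comp_le Q x)
  have hwQN : Integrable w ((Q ∘ₖ occupation Q) x) := by
    rw [comp_occupation]
    exact hw.integrable_of_abs_le hC
  calc w x = ∫ y, w y ∂occupation Q x - ∫ y, w y ∂(Q ∘ₖ occupation Q) x := by
        rw [comp_occupation, occupation_apply_eq_dirac_add Q x,
          integral_add_measure (hw.integrable_of_abs_le hC) (hw.integrable_of_abs_le hC),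
          integral_dirac' _ _ hw.stronglyMeasurable, add_sub_cancel_right]
    _ = ∫ y, (w y - ∫ z, w z ∂Q y) ∂occupation Q x := by
        rw [integral_sub (hw.integrable_of_abs_le hC) hwQN.integral_comp, integral_comp hwQN]
    _ = ∫ y, f y ∂occupation Q x :=
        integral_congr_ae <| h.mono fun y hy => (eq_sub_of_add_eq hy.symm).symm

end ProbabilityTheory.Kernel

theorem poisson_equation_and_uniqueness_general {X : Type*} [MeasurableSpace X]
    (Q : Kernel X X) (x₀ : X)
    (hM : (∑' n : ℕ, iterK Q n x₀ Set.univ) < ∞)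
    (f : X → ℝ) (hf : Measurable f) (Cf : ℝ) (hbf : ∀ x, |f x| ≤ Cf) :
    (∀ᵐ x ∂(Measure.sum fun n : ℕ => iterK Q n x₀),
        (∑' n : ℕ, ∫ y, f y ∂(iterK Q n x))
          = f x + ∫ y, (∑' n : ℕ, ∫ z, f z ∂(iterK Q n y)) ∂(Q x)) ∧
      ∀ w : X → ℝ, Measurable w → (∃ Cw : ℝ, ∀ x, |w x| ≤ Cw) →
        (∀ᵐ x ∂(Measure.sum fun n : ℕ => iterK Q n x₀),
          w x = f x + ∫ y, w y ∂(Q x)) →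
        (∀ᵐ x ∂(Measure.sum fun n : ℕ => iterK Q n x₀),
          w x = ∑' n : ℕ, ∫ y, f y ∂(iterK Q n x)) := by
  have hfin : ∀ᵐ x ∂Q.occupation x₀, Q.occupation x Set.univ < ∞ :=
    Kernel.ae_occupation_apply_lt_top Q x₀ .univ
      ((Kernel.occupation_apply_univ Q x₀).trans_lt hM).ne
  refine ⟨hfin.mono fun x hx => Kernel.tsum_integral_iterK_eq_add_integral hx.ne hf hbf, ?_⟩
  rintro w hw ⟨Cw, hCw⟩ hsol
  have hsol_meas : MeasurableSet {x | w x = f x + ∫ y, w y ∂Q x} :=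
    measurableSet_eq_fun hw (hf.add (hw.stronglyMeasurable.integral_kernel (κ := Q)).measurable)
  filter_upwards [hfin, Kernel.ae_ae_occupation Q hsol_meas hsol] with x hx hxsol
  rw [Kernel.tsum_integral_iterK_eq_integral_occupation hx.ne hf hbf]
  exact Kernel.eq_integral_occupation_of_ae hx.ne hw hCw hxsol

/-- For a substochastic kernel `Q` with finite occupation measure `M = Σₙ Qⁿ(·|x₀)` and a
bounded measurable `f`, the function `v(x) = Σₙ E_x[f(Xₙ)] = Σₙ ∫ f dQⁿ(·|x)` satisfies
the Poisson-type equation `v(x) = f(x) + ∫ v dQ(·|x)` for `M`-a.e. `x`; moreover any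
bounded measurable solution `w` of this equation coincides with `v` `M`-a.e. -/
theorem poisson_equation_and_uniqueness {X : Type*} [MeasurableSpace X]
    (Q : Kernel X X) (hsub : ∀ x, Q x Set.univ ≤ 1) (x₀ : X)
    (hM : (∑' n : ℕ, iterK Q n x₀ Set.univ) < ∞)
    (f : X → ℝ) (hf : Measurable f) (Cf : ℝ) (hbf : ∀ x, |f x| ≤ Cf) :
    (∀ᵐ x ∂(Measure.sum fun n : ℕ => iterK Q n x₀),
        (∑' n : ℕ, ∫ y, f y ∂(iterK Q n x))
          = f x + ∫ y, (∑' n : ℕ, ∫ z, f z ∂(iterK Q n y)) ∂(Q x)) ∧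
      ∀ w : X → ℝ, Measurable w → (∃ Cw : ℝ, ∀ x, |w x| ≤ Cw) →
        (∀ᵐ x ∂(Measure.sum fun n : ℕ => iterK Q n x₀),
          w x = f x + ∫ y, w y ∂(Q x)) →
        (∀ᵐ x ∂(Measure.sum fun n : ℕ => iterK Q n x₀),
          w x = ∑' n : ℕ, ∫ y, f y ∂(iterK Q n x)) :=
  poisson_equation_and_uniqueness_general Q x₀ hM f hf Cf hbf
end
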